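/- arXiv:2410.10401 — 3 statements merged into one kernel-verified Lean document; each statement's English description precedes it below -/
import Mathlib

section
/- The power graph and the commuting graph of a group G are equal if and only if G does not have a subgroup isomorphic to ℤ, ℤ × ℤ, ℤ × C_p, or C_p × C_q for primes p, q (not necessarily distinct). -/
/-!
A power of an element commutes with it, so `powGraph G ≤ comGraph G`, and the two graphs differ
exactly when some commuting `x, y` have neither one a power of the other. Each of the four listed
groups contains such a pair, and an embedding carries it into `G`.

Conversely, take such a pair. If `x` or `y` has infinite order, it generates a copy of `ℤ`.
Otherwise it suffices to find commuting `u, v` of prime orders with `u ∉ ⟨v⟩`: then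
`⟨u⟩ ∩ ⟨v⟩ = 1` and `⟨u, v⟩ ≅ C_p × C_q`. If neither of the orders of `x` and `y` divides the
other, a prime `p` occurs to a higher power in `|x|` and a different prime `q` to a higher power
in `|y|`, and suitable powers of `x` and `y` have orders `p` and `q`. If `|x|` divides `|y|`,
induction on `|x|` gives an element of prime order outside `⟨y⟩`: if the order-`p` element `x^s`
of `⟨x⟩` lies in `⟨y⟩`, it is `w^s` for some `w ∈ ⟨y⟩` (as `⟨y⟩` is cyclic of order divisible by
`ps = |x|`), and `x w⁻¹ ∉ ⟨y⟩` has order dividing `s`.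
-/

open Subgroup

/-- The power graph of a group: `x ~ y` iff `x ≠ y` and one is a power of the other. -/
def powGraph (G : Type*) [Group G] : SimpleGraph G where
  Adj x y := x ≠ y ∧ (x ∈ zpowers y ∨ y ∈ zpowers x)
  symm := by constructor; rintro x y ⟨h1, h2⟩; exact ⟨h1.symm, h2.symm⟩
  loopless := by constructor; rintro x ⟨h1, _⟩; exact h1 rfl

/-- The enhanced power graph: `x ~ y` iff `x ≠ y` and `⟨x, y⟩` is cyclic. -/
def epowGraph (G : Type*) [Group G] : SimpleGraph G where
  Adj x y := x ≠ y ∧ IsCyclic (closure ({x, y} : Set G))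
  symm := by
    constructor
    rintro x y ⟨h1, h2⟩
    refine ⟨h1.symm, ?_⟩
    rwa [Set.pair_comm y x]
  loopless := by constructor; rintro x ⟨h1, _⟩; exact h1 rfl

/-- The commuting graph: `x ~ y` iff `x ≠ y` and `x y = y x`. -/
def comGraph (G : Type*) [Group G] : SimpleGraph G where
  Adj x y := x ≠ y ∧ x * y = y * x
  symm := by constructor; rintro x y ⟨h1, h2⟩; exact ⟨h1.symm, h2.symm⟩
  loopless := by constructor; rintro x ⟨h1, _⟩; exact h1 rfl

/-- `G` has a subgroup isomorphic to `H`. -/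
def HasSubgroupIso (G : Type*) [Group G] (H : Type*) [Group H] : Prop :=
  ∃ K : Subgroup G, Nonempty (K ≃* H)

theorem Nat.exists_prime_factorization_lt_of_not_dvd {m n : ℕ} (hm : m ≠ 0) (hn : n ≠ 0)
    (h : ¬m ∣ n) : ∃ p, p.Prime ∧ p ∣ m ∧ n.factorization p < m.factorization p := by
  rw [← Nat.factorization_le_iff_dvd hm hn, Finsupp.le_def] at h
  simp only [not_forall, not_le] at h
  obtain ⟨p, hp⟩ := h
  have hpm : p ∈ m.primeFactors :=
    Nat.support_factorization m ▸ Finsupp.mem_support_iff.mpr (by omega)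
  exact ⟨p, Nat.prime_of_mem_primeFactors hpm, Nat.dvd_of_mem_primeFactors hpm, hp⟩

section

variable {G H : Type*} [Group G] [Group H]

theorem hasSubgroupIso_iff_exists_injective :
    HasSubgroupIso G H ↔ ∃ f : H →* G, Function.Injective f :=
  ⟨fun ⟨K, ⟨e⟩⟩ => ⟨K.subtype.comp e.symm.toMonoidHom, K.subtype_injective.comp e.symm.injective⟩,
    fun ⟨f, hf⟩ => ⟨f.range, ⟨(MonoidHom.ofInjective hf).symm⟩⟩⟩

def NonpowerCommuting (x y : G) : Prop :=
  Commute x y ∧ x ∉ zpowers y ∧ y ∉ zpowers x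

theorem NonpowerCommuting.symm {x y : G} (h : NonpowerCommuting x y) : NonpowerCommuting y x :=
  ⟨h.1.symm, h.2.2, h.2.1⟩

theorem powGraph_le_comGraph : powGraph G ≤ comGraph G := by
  rintro x y ⟨hne, hxy | hyx⟩
  · obtain ⟨k, rfl⟩ := mem_zpowers_iff.mp hxy
    exact ⟨hne, (Commute.zpow_self y k).eq⟩
  · obtain ⟨k, rfl⟩ := mem_zpowers_iff.mp hyx
    exact ⟨hne, (Commute.self_zpow x k).eq⟩

theorem powGraph_eq_comGraph_iff_not_exists_nonpowerCommuting :
    powGraph G = comGraph G ↔ ¬ ∃ x y : G, NonpowerCommuting x y := by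
  refine ⟨?_, fun h => le_antisymm powGraph_le_comGraph fun x y ⟨hne, hc⟩ => ?_⟩
  · rintro hG ⟨x, y, hc, hxy, hyx⟩
    have hadj : (powGraph G).Adj x y := hG ▸ ⟨fun h => hxy (h ▸ mem_zpowers x), hc.eq⟩
    exact hadj.2.elim hxy hyx
  · by_contra hpow
    exact h ⟨x, y, hc, fun hxy => hpow ⟨hne, .inl hxy⟩, fun hyx => hpow ⟨hne, .inr hyx⟩⟩

theorem NonpowerCommuting.map {x y : H} (h : NonpowerCommuting x y) {f : H →* G}
    (hf : Function.Injective f) : NonpowerCommuting (f x) (f y) := by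
  obtain ⟨hc, hxy, hyx⟩ := h
  refine ⟨hc.map f, ?_, ?_⟩ <;> rwa [← MonoidHom.map_zpowers, mem_map_iff_mem hf]

theorem HasSubgroupIso.exists_nonpowerCommuting (hG : HasSubgroupIso G H)
    {x y : H} (h : NonpowerCommuting x y) : ∃ x y : G, NonpowerCommuting x y := by
  obtain ⟨f, hf⟩ := hasSubgroupIso_iff_exists_injective.mp hG
  exact ⟨_, _, h.map hf⟩

theorem hasSubgroupIso_int_of_not_isOfFinOrder {x : G} (hx : ¬IsOfFinOrder x) :
    HasSubgroupIso G (Multiplicative ℤ) :=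
  hasSubgroupIso_iff_exists_injective.mpr
    ⟨zpowersHom G x, injective_zpow_iff_not_isOfFinOrder.mpr hx⟩

theorem exists_zmod_orderOf_injective_range_eq (u : G) :
    ∃ f : Multiplicative (ZMod (orderOf u)) →* G, Function.Injective f ∧ f.range = zpowers u := by
  have hgen : ∀ z : zpowers u, z ∈ zpowers ⟨u, mem_zpowers u⟩ := by
    rintro ⟨_, k, rfl⟩
    exact ⟨k, rfl⟩
  obtain ⟨e⟩ : Nonempty (Multiplicative (ZMod (orderOf u)) ≃* zpowers u) :=
    ⟨zmodMulEquivOfGenerator hgen (Nat.card_zpowers u)⟩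
  refine ⟨(zpowers u).subtype.comp e.toMonoidHom, Subtype.val_injective.comp e.injective, ?_⟩
  rw [MonoidHom.range_comp, MonoidHom.range_eq_top_of_surjective _ e.surjective,
    ← MonoidHom.range_eq_map, range_subtype]

theorem disjoint_zpowers_of_not_mem {u v : G} (hu : (orderOf u).Prime) (h : u ∉ zpowers v) :
    Disjoint (zpowers u) (zpowers v) := by
  rw [disjoint_iff_inf_le]
  rintro w ⟨hwu, hwv⟩
  by_contra hw
  have : Fact (orderOf u).Prime := ⟨hu⟩
  have hgen : zpowers (⟨w, hwu⟩ : zpowers u) = ⊤ :=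
    zpowers_eq_top_of_prime_card (Nat.card_zpowers u) (fun h1 => hw (congrArg Subtype.val h1))
  have hmem : (⟨u, mem_zpowers u⟩ : zpowers u) ∈ zpowers ⟨w, hwu⟩ := hgen ▸ mem_top _
  have : u ∈ zpowers w := by
    simpa only [MonoidHom.map_zpowers, coe_subtype] using mem_map_of_mem (zpowers u).subtype hmem
  exact h (zpowers_le.mpr hwv this)

theorem hasSubgroupIso_zmod_prod_of_not_mem {u v : G} (hc : Commute u v) (hu : (orderOf u).Prime)
    (h : u ∉ zpowers v) :
    HasSubgroupIso G (Multiplicative (ZMod (orderOf u) × ZMod (orderOf v))) := by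
  obtain ⟨f, hf, hfu⟩ := exists_zmod_orderOf_injective_range_eq u
  obtain ⟨g, hg, hgv⟩ := exists_zmod_orderOf_injective_range_eq v
  have hfg : ∀ a b, Commute (f a) (g b) := by
    intro a b
    obtain ⟨i, hi⟩ : f a ∈ zpowers u := hfu ▸ ⟨a, rfl⟩
    obtain ⟨j, hj⟩ : g b ∈ zpowers v := hgv ▸ ⟨b, rfl⟩
    exact hi ▸ hj ▸ hc.zpow_zpow i j
  have hinj := (MonoidHom.noncommCoprod_injective f g hfg).mpr
    ⟨hf, hg, hfu ▸ hgv ▸ disjoint_zpowers_of_not_mem hu h⟩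
  let e := MulEquiv.prodMultiplicative (ZMod (orderOf u)) (ZMod (orderOf v))
  exact hasSubgroupIso_iff_exists_injective.mpr
    ⟨(f.noncommCoprod g hfg).comp e.toMonoidHom, hinj.comp e.injective⟩

theorem exists_mem_zpowers_pow_eq {y u : G} {d e : ℕ} (hd : d ≠ 0) (hde : d * e ∣ orderOf y)
    (hu : u ∈ zpowers y) (hud : u ^ d = 1) : ∃ w ∈ zpowers y, w ^ e = u := by
  obtain ⟨k, rfl⟩ := hu
  obtain ⟨t, ht⟩ := hde
  have hdvd : ((d * (e * t) : ℕ) : ℤ) ∣ d * k := by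
    rw [← mul_assoc, ← ht, orderOf_dvd_iff_zpow_eq_one, mul_comm, zpow_mul, zpow_natCast, hud]
  obtain ⟨j, rfl⟩ : ((e * t : ℕ) : ℤ) ∣ k := by
    push_cast at hdvd ⊢
    exact (mul_dvd_mul_iff_left (by exact_mod_cast hd)).mp hdvd
  refine ⟨y ^ (t * j : ℤ), zpow_mem (mem_zpowers y) _, ?_⟩
  rw [← zpow_natCast, ← zpow_mul]
  push_cast
  ring_nf

theorem exists_mem_zpowers_orderOf_prime {y : G} (hy : IsOfFinOrder y) (hy1 : y ≠ 1) :
    ∃ v ∈ zpowers y, (orderOf v).Prime := by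
  have hp := Nat.minFac_prime (mt orderOf_eq_one_iff.mp hy1)
  refine ⟨y ^ (orderOf y / (orderOf y).minFac), pow_mem (mem_zpowers y) _, ?_⟩
  rwa [orderOf_pow_orderOf_div hy.orderOf_pos.ne' (Nat.minFac_dvd _)]

theorem exists_prime_orderOf_commute_not_mem_zpowers {x y : G} (hc : Commute x y)
    (hx : IsOfFinOrder x) (hdvd : orderOf x ∣ orderOf y) (h : x ∉ zpowers y) :
    ∃ u, Commute u y ∧ (orderOf u).Prime ∧ u ∉ zpowers y := by
  obtain ⟨n, hn⟩ : ∃ n, orderOf x = n := ⟨_, rfl⟩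
  induction n using Nat.strong_induction_on generalizing x with
  | _ n ih =>
  have hn1 : n ≠ 1 := fun h1 => h (orderOf_eq_one_iff.mp (hn.trans h1) ▸ one_mem _)
  set p := n.minFac
  have hp : p.Prime := Nat.minFac_prime hn1
  obtain ⟨s, hs⟩ : p ∣ n := n.minFac_dvd
  have hsn : s ∣ n := Dvd.intro_left _ hs.symm
  have hs0 : 0 < s := Nat.pos_of_dvd_of_pos hsn (hn ▸ hx.orderOf_pos)
  have hu : orderOf (x ^ s) = p := by
    rw [orderOf_pow_of_dvd hs0.ne' (hn ▸ hsn), hn, hs, Nat.mul_div_cancel _ hs0]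
  by_cases hu_mem : x ^ s ∈ zpowers y
  swap
  · exact ⟨x ^ s, hc.pow_left s, hu ▸ hp, hu_mem⟩
  obtain ⟨_, ⟨k, rfl⟩, hwu⟩ := exists_mem_zpowers_pow_eq hp.ne_zero (hs ▸ hn ▸ hdvd) hu_mem
    (hu ▸ pow_orderOf_eq_one _)
  have hx' : (x * (y ^ k)⁻¹) ^ s = 1 := by
    rw [((hc.zpow_right k).inv_right).mul_pow, inv_pow, hwu, mul_inv_cancel]
  have hord : orderOf (x * (y ^ k)⁻¹) ∣ s := orderOf_dvd_of_pow_eq_one hx'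
  refine ih _ ?_ (hc.mul_left (Commute.zpow_self y k).inv_left) ?_ ?_ ?_ rfl
  · calc orderOf (x * (y ^ k)⁻¹) ≤ s := Nat.le_of_dvd hs0 hord
      _ < p * s := lt_mul_left hs0 hp.one_lt
      _ = n := hs.symm
  · exact isOfFinOrder_iff_pow_eq_one.mpr ⟨s, hs0, hx'⟩
  · exact hord.trans (hsn.trans (hn ▸ hdvd))
  · intro hmem
    exact h (by simpa using mul_mem hmem (zpow_mem (mem_zpowers y) k))

theorem NonpowerCommuting.exists_commute_prime_orderOf_not_mem_zpowers_of_dvd {x y : G}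
    (h : NonpowerCommuting x y) (hx : IsOfFinOrder x) (hy : IsOfFinOrder y)
    (hdvd : orderOf x ∣ orderOf y) :
    ∃ u v : G, Commute u v ∧ (orderOf u).Prime ∧ (orderOf v).Prime ∧ u ∉ zpowers v := by
  obtain ⟨hc, hxy, hyx⟩ := h
  obtain ⟨u, huy, hu, hu_mem⟩ := exists_prime_orderOf_commute_not_mem_zpowers hc hx hdvd hxy
  obtain ⟨_, ⟨k, rfl⟩, hv⟩ :=
    exists_mem_zpowers_orderOf_prime hy fun hy1 => hyx (hy1 ▸ one_mem _)
  exact ⟨u, y ^ k, huy.zpow_right k, hu, hv,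
    fun hmem => hu_mem (zpowers_le.mpr (zpow_mem (mem_zpowers y) k) hmem)⟩

theorem NonpowerCommuting.exists_commute_prime_orderOf_not_mem_zpowers {x y : G}
    (h : NonpowerCommuting x y) (hx : IsOfFinOrder x) (hy : IsOfFinOrder y) :
    ∃ u v : G, Commute u v ∧ (orderOf u).Prime ∧ (orderOf v).Prime ∧ u ∉ zpowers v := by
  by_cases hxy : orderOf x ∣ orderOf y
  · exact h.exists_commute_prime_orderOf_not_mem_zpowers_of_dvd hx hy hxy
  by_cases hyx : orderOf y ∣ orderOf x
  · exact h.symm.exists_commute_prime_orderOf_not_mem_zpowers_of_dvd hy hx hyx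
  obtain ⟨p, hp, hpx, hp_lt⟩ := Nat.exists_prime_factorization_lt_of_not_dvd
    hx.orderOf_pos.ne' hy.orderOf_pos.ne' hxy
  obtain ⟨q, hq, hqy, hq_lt⟩ := Nat.exists_prime_factorization_lt_of_not_dvd
    hy.orderOf_pos.ne' hx.orderOf_pos.ne' hyx
  have hpq : p ≠ q := by rintro rfl; omega
  have hu := orderOf_pow_orderOf_div hx.orderOf_pos.ne' hpx
  have hv := orderOf_pow_orderOf_div hy.orderOf_pos.ne' hqy
  refine ⟨_, _, h.1.pow_pow _ _, hu ▸ hp, hv ▸ hq, fun hmem => hpq ?_⟩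
  have := orderOf_dvd_of_mem_zpowers hmem
  rwa [hu, hv, Nat.prime_dvd_prime_iff_eq hp hq] at this

theorem NonpowerCommuting.hasSubgroupIso {x y : G} (h : NonpowerCommuting x y) :
    HasSubgroupIso G (Multiplicative ℤ) ∨
      ∃ p q : ℕ, p.Prime ∧ q.Prime ∧ HasSubgroupIso G (Multiplicative (ZMod p × ZMod q)) := by
  by_cases hx : IsOfFinOrder x
  swap
  · exact .inl (hasSubgroupIso_int_of_not_isOfFinOrder hx)
  by_cases hy : IsOfFinOrder y
  swap
  · exact .inl (hasSubgroupIso_int_of_not_isOfFinOrder hy)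
  obtain ⟨u, v, huv, hu, hv, hmem⟩ := h.exists_commute_prime_orderOf_not_mem_zpowers hx hy
  exact .inr ⟨_, _, hu, hv, hasSubgroupIso_zmod_prod_of_not_mem huv hu hmem⟩

end

open Multiplicative in
theorem nonpowerCommuting_ofAdd_two_three :
    NonpowerCommuting (ofAdd 2 : Multiplicative ℤ) (ofAdd 3) := by
  refine ⟨Commute.all _ _, ?_, ?_⟩ <;>
  · rintro ⟨k, hk⟩
    have := congrArg toAdd hk
    simp only [toAdd_zpow, toAdd_ofAdd, smul_eq_mul] at this
    omega

open Multiplicative in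
theorem nonpowerCommuting_ofAdd_prod {A B : Type*} [AddGroup A] [AddGroup B] {a : A} {b : B}
    (ha : a ≠ 0) (hb : b ≠ 0) :
    NonpowerCommuting (ofAdd (a, 0) : Multiplicative (A × B)) (ofAdd (0, b)) := by
  refine ⟨toAdd.injective (by simp), ?_, ?_⟩
  · rintro ⟨k, hk⟩
    exact ha (by simpa using congrArg (fun z => z.toAdd.1) hk.symm)
  · rintro ⟨k, hk⟩
    exact hb (by simpa using congrArg (fun z => z.toAdd.2) hk.symm)

theorem powGraph_eq_comGraph_iff {G : Type*} [Group G] :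
    powGraph G = comGraph G ↔
      ¬ (HasSubgroupIso G (Multiplicative ℤ) ∨
        HasSubgroupIso G (Multiplicative (ℤ × ℤ)) ∨
        (∃ p : ℕ, p.Prime ∧ HasSubgroupIso G (Multiplicative (ℤ × ZMod p))) ∨
        ∃ p q : ℕ, p.Prime ∧ q.Prime ∧
          HasSubgroupIso G (Multiplicative (ZMod p × ZMod q))) := by
  rw [powGraph_eq_comGraph_iff_not_exists_nonpowerCommuting, not_iff_not]
  constructor
  · rintro ⟨x, y, h⟩
    rcases h.hasSubgroupIso with h | h
    exacts [.inl h, .inr (.inr (.inr h))]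
  · rintro (h | h | ⟨p, hp, h⟩ | ⟨p, q, hp, hq, h⟩)
    · exact h.exists_nonpowerCommuting nonpowerCommuting_ofAdd_two_three
    · exact h.exists_nonpowerCommuting (nonpowerCommuting_ofAdd_prod one_ne_zero one_ne_zero)
    · have : Fact p.Prime := ⟨hp⟩
      exact h.exists_nonpowerCommuting (nonpowerCommuting_ofAdd_prod one_ne_zero one_ne_zero)
    · have : Fact p.Prime := ⟨hp⟩
      have : Fact q.Prime := ⟨hq⟩
      exact h.exists_nonpowerCommuting (nonpowerCommuting_ofAdd_prod one_ne_zero one_ne_zero)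
end

section
/- For the locally dihedral group D_{2^∞}, the power graph equals the enhanced power graph, but the enhanced power graph is a proper subgraph of the commuting graph. -/
open Subgroup

/-- The Prüfer 2-group, realised as the subgroup of `ℂˣ` of `2 ^ n`-th roots of unity. -/
def Prufer2 : Subgroup ℂˣ where
  carrier := {z | ∃ n : ℕ, z ^ (2 ^ n) = 1}
  one_mem' := ⟨0, one_pow _⟩
  inv_mem' := by rintro z ⟨n, hn⟩; exact ⟨n, by rw [inv_pow, hn, inv_one]⟩
  mul_mem' := by
    rintro z w ⟨n, hn⟩ ⟨m, hm⟩
    refine ⟨n + m, ?_⟩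
    rw [mul_pow, pow_add, pow_mul, hn, one_pow, one_mul, mul_comm (2 ^ n) (2 ^ m),
      pow_mul, hm, one_pow]

/-!
An element outside `C` has the form `c * s`, and `(c * s) ^ 2 = c * (s * c * s) = 1`; with `C`
a Prüfer `2`-group this makes `D` a `2`-group. In a `p`-group every cyclic subgroup of `⟨g⟩` is
some `⟨g ^ p ^ i⟩`, so these form a chain and two elements generating a cyclic group are powers
of one another: Pow = EPow. For properness, the involution `c` of `C` commutes with `s` (as
`s * c * s = c⁻¹ = c`), while two distinct involutions are never powers of one another.
-/

section
variable {G : Type*} [Group G]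

theorem isCyclic_closure_pair_iff {x y : G} :
    IsCyclic (closure ({x, y} : Set G)) ↔ ∃ g, x ∈ zpowers g ∧ y ∈ zpowers g := by
  constructor
  · intro h
    obtain ⟨g, hg⟩ := (closure ({x, y} : Set G)).isCyclic_iff_exists_zpowers_eq_top.mp h
    exact ⟨g, hg ▸ subset_closure (by simp), hg ▸ subset_closure (by simp)⟩
  · rintro ⟨g, hx, hy⟩
    have : closure ({x, y} : Set G) ≤ zpowers g := by
      rw [closure_le, Set.insert_subset_iff, Set.singleton_subset_iff]
      exact ⟨hx, hy⟩
    exact Subgroup.isCyclic_of_le this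

theorem powGraph_le_epowGraph : powGraph G ≤ epowGraph G := by
  rintro x y ⟨hne, hxy | hyx⟩
  · exact ⟨hne, isCyclic_closure_pair_iff.mpr ⟨y, hxy, mem_zpowers y⟩⟩
  · exact ⟨hne, isCyclic_closure_pair_iff.mpr ⟨x, mem_zpowers x, hyx⟩⟩

theorem epowGraph_le_comGraph : epowGraph G ≤ comGraph G := by
  rintro x y ⟨hne, hcyc⟩
  obtain ⟨g, hx, hy⟩ := isCyclic_closure_pair_iff.mp hcyc
  obtain ⟨a, rfl⟩ := mem_zpowers_iff.mp hx
  obtain ⟨b, rfl⟩ := mem_zpowers_iff.mp hy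
  exact ⟨hne, (Commute.zpow_zpow_self g a b).eq⟩

theorem zpowers_zpow_eq_zpowers_pow_gcd (g : G) (a : ℤ) :
    zpowers (g ^ a) = zpowers (g ^ a.gcd (orderOf g)) := by
  apply le_antisymm <;> rw [zpowers_le]
  · obtain ⟨k, hk⟩ := Int.gcd_dvd_left a (orderOf g)
    exact mem_zpowers_iff.mpr ⟨k, by rw [← zpow_natCast, ← zpow_mul, ← hk]⟩
  · refine ⟨a.gcdA (orderOf g), ?_⟩
    rw [← zpow_natCast, Int.gcd_eq_gcd_ab, zpow_add, zpow_mul, zpow_mul, zpow_natCast,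
      pow_orderOf_eq_one, one_zpow, mul_one]

theorem eq_one_or_eq_of_mem_zpowers_of_sq_eq_one {x y : G} (hy : y ^ 2 = 1)
    (hx : x ∈ zpowers y) : x = 1 ∨ x = y := by
  obtain ⟨k, rfl⟩ := mem_zpowers_iff.mp hx
  rw [zpow_eq_zpow_emod' k hy]
  rcases Int.emod_two_eq_zero_or_one k with h | h <;> simp [h]

theorem not_powGraph_adj_of_sq_eq_one {x y : G} (hx : x ≠ 1) (hy : y ≠ 1)
    (hx2 : x ^ 2 = 1) (hy2 : y ^ 2 = 1) : ¬ (powGraph G).Adj x y := by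
  rintro ⟨hne, hxy | hyx⟩
  · exact (eq_one_or_eq_of_mem_zpowers_of_sq_eq_one hy2 hxy).elim hx hne
  · exact (eq_one_or_eq_of_mem_zpowers_of_sq_eq_one hx2 hyx).elim hy hne.symm

end

namespace IsPGroup
variable {p : ℕ} [Fact p.Prime] {G : Type*} [Group G]

theorem exists_zpowers_eq_zpowers_pow (hp : IsPGroup p G) {g x : G} (hx : x ∈ zpowers g) :
    ∃ i, zpowers x = zpowers (g ^ p ^ i) := by
  obtain ⟨a, rfl⟩ := mem_zpowers_iff.mp hx
  obtain ⟨n, hn⟩ := (IsPGroup.iff_orderOf.mp hp) g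
  have hd : a.gcd (orderOf g) ∣ p ^ n := by
    rw [← hn]; exact_mod_cast Int.gcd_dvd_right a (orderOf g)
  obtain ⟨i, -, hi⟩ := (Nat.dvd_prime_pow Fact.out).mp hd
  exact ⟨i, hi ▸ zpowers_zpow_eq_zpowers_pow_gcd g a⟩

theorem mem_zpowers_or_mem_zpowers (hp : IsPGroup p G) {g x y : G} (hx : x ∈ zpowers g)
    (hy : y ∈ zpowers g) : x ∈ zpowers y ∨ y ∈ zpowers x := by
  obtain ⟨i, hi⟩ := hp.exists_zpowers_eq_zpowers_pow hx
  obtain ⟨j, hj⟩ := hp.exists_zpowers_eq_zpowers_pow hy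
  have key : ∀ {i j : ℕ}, i ≤ j → g ^ p ^ j ∈ zpowers (g ^ p ^ i) := fun hij => by
    obtain ⟨k, hk⟩ := pow_dvd_pow p hij
    exact hk ▸ pow_mul g _ k ▸ pow_mem (mem_zpowers _) k
  rcases le_total i j with hij | hji
  · exact .inr (hi ▸ zpowers_le.mpr (key hij) (hj ▸ mem_zpowers y))
  · exact .inl (hj ▸ zpowers_le.mpr (key hji) (hi ▸ mem_zpowers x))

theorem powGraph_eq_epowGraph (hp : IsPGroup p G) : powGraph G = epowGraph G := by
  refine le_antisymm powGraph_le_epowGraph ?_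
  rintro x y ⟨hne, hcyc⟩
  obtain ⟨g, hx, hy⟩ := isCyclic_closure_pair_iff.mp hcyc
  exact ⟨hne, hp.mem_zpowers_or_mem_zpowers hx hy⟩

end IsPGroup

theorem Prufer2.isPGroup : IsPGroup 2 Prufer2 := fun z =>
  let ⟨n, hn⟩ := z.2
  ⟨n, Subtype.ext hn⟩

theorem Prufer2.exists_orderOf_eq_four : ∃ z : Prufer2, orderOf z = 4 := by
  have hI := Complex.isPrimitiveRoot_I
  let u : ℂˣ := (hI.isUnit (by norm_num)).unit
  have hu : orderOf u = 4 := by rw [← orderOf_units, IsUnit.unit_spec, hI.eq_orderOf]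
  have hmem : u ∈ Prufer2 := ⟨2, by simpa [hu] using pow_orderOf_eq_one u⟩
  exact ⟨⟨u, hmem⟩, by rw [Subgroup.orderOf_mk, hu]⟩

section Involution
variable {G : Type*} [Group G] {C : Subgroup G} {s : G}

theorem mul_mul_self_of_sq_eq_one (hs : s ^ 2 = 1) (x : G) : s * (s * x) = x := by
  rw [← mul_assoc, ← sq, hs, one_mul]

theorem mem_or_mul_mem_of_closure_union_eq_top (hs : s ^ 2 = 1)
    (hnorm : ∀ c ∈ C, s * c * s ∈ C) (hgen : closure ((C : Set G) ∪ {s}) = ⊤) (x : G) :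
    x ∈ C ∨ x * s ∈ C := by
  have hss : s * s = 1 := (sq s).symm.trans hs
  have hcancel := mul_mul_self_of_sq_eq_one hs
  induction (hgen ▸ mem_top x : x ∈ closure ((C : Set G) ∪ {s})) using closure_induction with
  | mem y hy =>
    rcases hy with hy | rfl
    · exact .inl hy
    · exact .inr (hss ▸ one_mem C)
  | one => exact .inl (one_mem C)
  | mul a b _ _ ha hb =>
    rcases ha with ha | ha <;> rcases hb with hb | hb
    · exact .inl (mul_mem ha hb)
    · exact .inr (by simpa only [mul_assoc] using mul_mem ha hb)
    · exact .inr (by simpa only [mul_assoc, hcancel] using mul_mem ha (hnorm b hb))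
    · exact .inl (by simpa only [mul_assoc, hcancel, hss, mul_one] using mul_mem ha (hnorm _ hb))
  | inv a _ ha =>
    rcases ha with ha | ha
    · exact .inl (inv_mem ha)
    · have h := hnorm _ (inv_mem ha)
      exact .inr (by simpa only [mul_inv_rev, mul_assoc, mul_inv_cancel_left] using h)

theorem sq_eq_one_of_mul_mem (hs : s ^ 2 = 1) (hconj : ∀ c ∈ C, s * c * s = c⁻¹) {x : G}
    (hx : x * s ∈ C) : x ^ 2 = 1 :=
  calc x ^ 2 = x * s * (s * (x * s) * s) := by
        simp only [sq, mul_assoc, mul_mul_self_of_sq_eq_one hs, (sq s).symm.trans hs, mul_one]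
    _ = 1 := by rw [hconj _ hx, mul_inv_cancel]

theorem isPGroup_two_of_closure_union_eq_top (hC : IsPGroup 2 C) (hs : s ^ 2 = 1)
    (hconj : ∀ c ∈ C, s * c * s = c⁻¹) (hgen : closure ((C : Set G) ∪ {s}) = ⊤) :
    IsPGroup 2 G := by
  intro x
  rcases mem_or_mul_mem_of_closure_union_eq_top hs (fun c hc => hconj c hc ▸ inv_mem hc) hgen x
    with hx | hx
  · obtain ⟨n, hn⟩ := hC ⟨x, hx⟩
    exact ⟨n, congrArg Subtype.val hn⟩
  · exact ⟨1, sq_eq_one_of_mul_mem hs hconj hx⟩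

theorem sq_eq_one_of_mem (hs : s ^ 2 = 1) (hconj : ∀ c ∈ C, s * c * s = c⁻¹) (hsC : s ∈ C)
    {c : G} (hc : c ∈ C) : c ^ 2 = 1 := by
  have h := hconj (c * s) (mul_mem hc hsC)
  have hss : s * s = 1 := (sq s).symm.trans hs
  rw [mul_inv_rev, inv_eq_of_mul_eq_one_left hss] at h
  simp only [mul_assoc, hss, mul_one] at h
  rw [sq, mul_eq_one_iff_eq_inv]
  exact mul_left_cancel h

theorem commute_of_sq_eq_one (hs : s ^ 2 = 1) (hconj : ∀ c ∈ C, s * c * s = c⁻¹) {c : G}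
    (hc : c ∈ C) (hc2 : c ^ 2 = 1) : Commute c s := by
  have h := hconj c hc
  rw [inv_eq_of_mul_eq_one_left ((sq c).symm.trans hc2)] at h
  calc c * s = s * c * s * s := by rw [h]
    _ = s * c := by simp only [mul_assoc, (sq s).symm.trans hs, mul_one]

end Involution

/-- For the locally dihedral group `D_{2^∞}` (presented as generated by a copy `C` of the
Prüfer 2-group and an element `s` with `s ^ 2 = 1` and `s c s = c⁻¹`), the power graph
equals the enhanced power graph, which is a proper subgraph of the commuting graph. -/
theorem locally_dihedral_graphs
    {D : Type*} [Group D] (C : Subgroup D) (hC : Nonempty (C ≃* Prufer2))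
    (s : D) (hs : s ^ 2 = 1) (hconj : ∀ c ∈ C, s * c * s = c⁻¹)
    (hgen : Subgroup.closure ((C : Set D) ∪ {s}) = ⊤) :
    powGraph D = epowGraph D ∧
      epowGraph D ≤ comGraph D ∧ epowGraph D ≠ comGraph D := by
  obtain ⟨φ⟩ := hC
  have hp : IsPGroup 2 D :=
    isPGroup_two_of_closure_union_eq_top (Prufer2.isPGroup.of_equiv φ.symm) hs hconj hgen
  obtain ⟨z, hz⟩ := Prufer2.exists_orderOf_eq_four
  obtain ⟨c, hcC, hc⟩ : ∃ c ∈ C, orderOf c = 4 :=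
    ⟨φ.symm z, (φ.symm z).2, by rw [Subgroup.orderOf_coe, MulEquiv.orderOf_eq, hz]⟩
  have hc2 : c ^ 2 ≠ 1 := pow_ne_one_of_lt_orderOf (by norm_num) (by omega)
  have hc4 : (c ^ 2) ^ 2 = 1 := by rw [← pow_mul, ← orderOf_dvd_iff_pow_eq_one, hc]
  have hsC : s ∉ C := fun h => hc2 (sq_eq_one_of_mem hs hconj h hcC)
  have hs1 : s ≠ 1 := fun h => hsC (h ▸ one_mem C)
  refine ⟨hp.powGraph_eq_epowGraph, epowGraph_le_comGraph, fun h => ?_⟩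
  have hadj : (comGraph D).Adj (c ^ 2) s :=
    ⟨fun h' => hsC (h' ▸ pow_mem hcC 2), commute_of_sq_eq_one hs hconj (pow_mem hcC 2) hc4⟩
  exact not_powGraph_adj_of_sq_eq_one hc2 hs1 hc4 hs (by rwa [hp.powGraph_eq_epowGraph, h])
end

section
/- The power graph of the locally quaternion group Q_{2^∞} is isomorphic (as a graph) to the commuting graph of the locally dihedral group D_{2^∞}. -/
open Subgroup

/-!
In both groups the Prüfer subgroup (`CQ`, resp. `CD`) has index two and every element outside it
inverts it by conjugation. In `Q` every `g ∉ CQ` squares to the unique involution `z`, so it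
generates `{1, z, g, zg}`; in `D` every `g ∉ CD` is an involution, and two such elements commute
exactly when they differ by an involution of `CD`, i.e. by `1` or the involution `z'`. Since the
cyclic subgroups of the Prüfer group form a chain and `CD` is abelian, both graphs have the same
shape: the subgroup is a clique, `1` and the involution are joined to everything, and the only
other edges are `{g, zg}` for `g` outside the subgroup. Matching the cosets `CQ, CQ x` with
`CD, CD s` through an isomorphism `CQ ≅ CD` therefore gives a graph isomorphism.
-/

theorem Units.mem_zpowers_of_orderOf_dvd {R : Type*} [CommRing R] [IsDomain R] {u v : Rˣ}
    (hv : orderOf v ≠ 0) (h : orderOf u ∣ orderOf v) : u ∈ zpowers v := by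
  have : NeZero (orderOf v) := ⟨hv⟩
  rw [(IsPrimitiveRoot.orderOf v).zpowers_eq, mem_rootsOfUnity, ← orderOf_dvd_iff_pow_eq_one]
  exact h

theorem Prufer2.exists_orderOf_eq_two_pow {u : ℂˣ} (hu : u ∈ Prufer2) :
    ∃ i : ℕ, orderOf u = 2 ^ i := by
  obtain ⟨n, hn⟩ := hu
  obtain ⟨i, -, hi⟩ := (Nat.dvd_prime_pow Nat.prime_two).1 (orderOf_dvd_of_pow_eq_one hn)
  exact ⟨i, hi⟩

theorem Prufer2.mem_zpowers_or_mem_zpowers {u v : ℂˣ} (hu : u ∈ Prufer2) (hv : v ∈ Prufer2) :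
    u ∈ zpowers v ∨ v ∈ zpowers u := by
  obtain ⟨i, hi⟩ := Prufer2.exists_orderOf_eq_two_pow hu
  obtain ⟨j, hj⟩ := Prufer2.exists_orderOf_eq_two_pow hv
  rcases le_total i j with hij | hji
  · exact .inl <| Units.mem_zpowers_of_orderOf_dvd (by simp [hj]) (hi ▸ hj ▸ pow_dvd_pow 2 hij)
  · exact .inr <| Units.mem_zpowers_of_orderOf_dvd (by simp [hi]) (hi ▸ hj ▸ pow_dvd_pow 2 hji)

theorem Prufer2.exists_mul_self_ne_one : ∃ u ∈ Prufer2, u * u ≠ 1 := by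
  refine ⟨Units.mk0 Complex.I Complex.I_ne_zero, ⟨2, ?_⟩, ?_⟩
  · ext; simp [Complex.I_pow_four]
  · intro h
    have := congrArg Units.val h
    norm_num at this

section

variable {G H : Type*} [Group G] [Group H] {C : Subgroup G} {C' : Subgroup H} {t z : G} {z' : H}

theorem MonoidHom.mem_zpowers_map_iff {f : G →* H}
    (hf : Function.Injective f) {a b : G} : f a ∈ zpowers (f b) ↔ a ∈ zpowers b := by
  simp only [mem_zpowers_iff, ← map_zpow, hf.eq_iff]

theorem mem_zpowers_or_mem_zpowers_of_mulEquiv (e : C ≃* Prufer2) {a b : G} (ha : a ∈ C)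
    (hb : b ∈ C) : a ∈ zpowers b ∨ b ∈ zpowers a := by
  let f : C →* ℂˣ := Prufer2.subtype.comp e.toMonoidHom
  have hf : Function.Injective f := Prufer2.subtype_injective.comp e.injective
  have key (u v : C) : u.1 ∈ zpowers v.1 ↔ f u ∈ zpowers (f v) := by
    rw [MonoidHom.mem_zpowers_map_iff hf, ← MonoidHom.mem_zpowers_map_iff C.subtype_injective]
    rfl
  rw [key ⟨a, ha⟩ ⟨b, hb⟩, key ⟨b, hb⟩ ⟨a, ha⟩]
  exact Prufer2.mem_zpowers_or_mem_zpowers (e _).2 (e _).2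

theorem exists_mul_self_ne_one_of_mulEquiv (e : C ≃* Prufer2) : ∃ c ∈ C, c * c ≠ 1 := by
  obtain ⟨u, hu, hne⟩ := Prufer2.exists_mul_self_ne_one
  refine ⟨e.symm ⟨u, hu⟩, (e.symm _).2, fun h => hne ?_⟩
  have : e.symm ⟨u, hu⟩ * e.symm ⟨u, hu⟩ = 1 := Subtype.ext h
  simpa using congrArg (fun c => (e c : ℂˣ)) this

theorem mul_comm_of_inv_mul_mul_eq_inv (hinv : ∀ c ∈ C, t⁻¹ * c * t = c⁻¹) {a b : G}
    (ha : a ∈ C) (hb : b ∈ C) : a * b = b * a := by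
  refine inv_injective ?_
  rw [← hinv _ (mul_mem ha hb), mul_inv_rev, ← hinv a ha, ← hinv b hb]
  group

theorem mul_self_eq_one_of_inv_mul_mul_eq_inv (hinv : ∀ c ∈ C, t⁻¹ * c * t = c⁻¹)
    (ht : t ∈ C) {c : G} (hc : c ∈ C) : c * c = 1 := by
  rw [mul_eq_one_iff_eq_inv, ← hinv c hc, mul_assoc, mul_comm_of_inv_mul_mul_eq_inv hinv hc ht,
    inv_mul_cancel_left]

theorem index_eq_two_of_closure_union_singleton (ht : t ∉ C) (htt : t * t ∈ C)
    (hnorm : ∀ c ∈ C, t⁻¹ * c * t ∈ C) (hgen : closure ((C : Set G) ∪ {t}) = ⊤) :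
    C.index = 2 := by
  refine index_eq_two_iff_exists_notMem_and'.2 ⟨t⁻¹, inv_mem_iff.not.2 ht, fun g => ?_⟩
  have hg : g ∈ closure ((C : Set G) ∪ {t}) := hgen ▸ mem_top g
  induction hg using closure_induction with
  | mem g hg =>
    rcases hg with hg | rfl
    · exact .inr hg
    · exact .inl (by simp)
  | one => exact .inr C.one_mem
  | mul a b _ _ ha hb =>
    rcases ha with ha | ha <;> rcases hb with hb | hb
    · right
      convert mul_mem (mul_mem htt (hnorm _ ha)) hb using 1
      group
    · left
      convert mul_mem ha hb using 1
      group
    · left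
      convert mul_mem (hnorm _ ha) hb using 1
      group
    · exact .inr (mul_mem ha hb)
  | inv a _ ha =>
    rcases ha with ha | ha
    · left
      convert mul_mem (hnorm _ (inv_mem ha)) (inv_mem htt) using 1
      group
    · exact .inr (inv_mem ha)

theorem inv_mul_mul_eq_inv_of_notMem (hC : C.index = 2) (ht : t ∉ C)
    (hinv : ∀ c ∈ C, t⁻¹ * c * t = c⁻¹) {g c : G} (hg : g ∉ C) (hc : c ∈ C) :
    g⁻¹ * c * g = c⁻¹ := by
  have hd : g * t⁻¹ ∈ C := by simp [mul_mem_iff_of_index_two hC, hg, ht]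
  calc g⁻¹ * c * g = t⁻¹ * ((g * t⁻¹)⁻¹ * (c * (g * t⁻¹))) * t := by group
    _ = t⁻¹ * c * t := by rw [mul_comm_of_inv_mul_mul_eq_inv hinv hc hd]; group
    _ = c⁻¹ := hinv c hc

theorem mul_self_eq_of_notMem (hC : C.index = 2) (ht : t ∉ C)
    (hinv : ∀ c ∈ C, t⁻¹ * c * t = c⁻¹) {g : G} (hg : g ∉ C) : g * g = t * t := by
  have hd : g * t⁻¹ ∈ C := by simp [mul_mem_iff_of_index_two hC, hg, ht]
  calc g * g = t * (g⁻¹ * (g * t⁻¹) * g) * g := by group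
    _ = t * (g * t⁻¹)⁻¹ * g := by rw [inv_mul_mul_eq_inv_of_notMem hC ht hinv hg hd]
    _ = t * t := by group

theorem mem_zpowers_iff_of_mul_self_eq {a b : G} (hb : b * b = z) (hz : z * z = 1) :
    a ∈ zpowers b ↔ a = 1 ∨ a = z ∨ a = b ∨ a = z * b := by
  have hb4 : b ^ 4 = 1 := by rw [show 4 = 2 + 2 from rfl, pow_add, pow_two, hb, hz]
  constructor
  · rintro ⟨k, rfl⟩
    simp only [zpow_eq_zpow_emod' k hb4]
    have : k % 4 = 0 ∨ k % 4 = 1 ∨ k % 4 = 2 ∨ k % 4 = 3 := by omega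
    rcases this with h | h | h | h <;> simp [h, ← hb, zpow_ofNat, pow_succ]
  · rintro (rfl | rfl | rfl | rfl)
    · exact one_mem _
    · exact ⟨2, by simp [pow_two, hb]⟩
    · exact mem_zpowers a
    · exact ⟨3, by simp [pow_succ, hb]⟩

theorem mul_comm_iff_of_notMem (hC : C.index = 2)
    (hinv : ∀ g ∉ C, ∀ c ∈ C, g⁻¹ * c * g = c⁻¹) (hsq : ∀ g ∉ C, g * g = 1) (hzC : z ∈ C)
    (hinvol : ∀ c ∈ C, c * c = 1 ↔ c = 1 ∨ c = z)
    {a b : G} (hb : b ∉ C) : a * b = b * a ↔ a = 1 ∨ a = z ∨ a = b ∨ a = z * b := by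
  have hzb : z * b = b * z := by
    have hzinv : z⁻¹ = z := inv_eq_of_mul_eq_one_right ((hinvol z hzC).2 (.inr rfl))
    have h := hinv b hb z hzC
    rw [hzinv] at h
    calc z * b = b * (b⁻¹ * z * b) := by group
      _ = b * z := by rw [h]
  constructor
  · intro hab
    by_cases ha : a ∈ C
    · have : a * a = 1 := by
        rw [mul_eq_one_iff_eq_inv, ← hinv b hb a ha, mul_assoc, hab, inv_mul_cancel_left]
      rcases (hinvol a ha).1 this with h | h <;> simp [h]
    · have hc : a * b⁻¹ ∈ C := by simp [mul_mem_iff_of_index_two hC, ha, hb]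
      have : a * b⁻¹ * (a * b⁻¹) = 1 := by
        rw [(Commute.inv_left (Commute.symm hab)).mul_mul_mul_comm, hsq a ha, ← mul_inv_rev,
          hsq b hb, inv_one, one_mul]
      rcases (hinvol _ hc).1 this with h | h
      · exact .inr (.inr (.inl (mul_inv_eq_one.1 h)))
      · exact .inr (.inr (.inr (mul_inv_eq_iff_eq_mul.1 h)))
  · rintro (rfl | rfl | rfl | rfl)
    · simp
    · exact hzb
    · rfl
    · exact (congrArg (· * b) hzb).trans (mul_assoc b z b)

theorem mul_self_eq_one_iff_of_orderOf_eq_two (hz : orderOf z = 2)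
    (huniq : ∀ w ∈ C, orderOf w = 2 → w = z) {c : G} (hc : c ∈ C) :
    c * c = 1 ↔ c = 1 ∨ c = z := by
  refine ⟨fun h => or_iff_not_imp_left.2 fun h1 => huniq c hc ?_, ?_⟩
  · exact orderOf_eq_prime ((pow_two c).trans h) h1
  · rintro (rfl | rfl)
    · exact mul_one 1
    · rw [← pow_two, ← hz, pow_orderOf_eq_one]

theorem mul_self_eq_one_iff_of_mulEquiv (ψ : C ≃* C') (hzC : z ∈ C)
    (h : ∀ c ∈ C, c * c = 1 ↔ c = 1 ∨ c = z) {w : H} (hw : w ∈ C') :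
    w * w = 1 ↔ w = 1 ∨ w = ψ ⟨z, hzC⟩ := by
  obtain ⟨c, rfl⟩ : ∃ c : C, (ψ c : H) = w := ⟨ψ.symm ⟨w, hw⟩, by simp⟩
  have key (u v : C) : (ψ u : H) = ψ v ↔ (u : G) = v := by
    rw [Subtype.coe_inj, ψ.injective.eq_iff, Subtype.coe_inj]
  have hsq := key (c * c) 1
  have hone := key c 1
  simp only [map_mul, map_one, coe_mul, coe_one] at hsq hone
  rw [hsq, hone, key]
  exact h c c.2

open Classical in
noncomputable def Subgroup.sumEquivOfIndexEqTwo (hC : C.index = 2) (ht : t ∉ C) :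
    C ⊕ C ≃ G :=
  (Equiv.sumCongr (Equiv.refl C) ((Equiv.mulRight t).subtypeEquiv fun c => by
    simp [mul_mem_iff_of_index_two hC, ht])).trans (Equiv.sumCompl (· ∈ C))

namespace Subgroup

variable (hC : C.index = 2) (ht : t ∉ C)

@[simp]
theorem sumEquivOfIndexEqTwo_inl (c : C) : sumEquivOfIndexEqTwo hC ht (.inl c) = c := rfl

@[simp]
theorem sumEquivOfIndexEqTwo_inr (c : C) : sumEquivOfIndexEqTwo hC ht (.inr c) = c * t := rfl

theorem sumEquivOfIndexEqTwo_mem_iff (p : C ⊕ C) :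
    sumEquivOfIndexEqTwo hC ht p ∈ C ↔ p.isLeft := by
  cases p <;> simp [mul_mem_iff_of_index_two hC, ht]

theorem sumEquivOfIndexEqTwo_map_mul_left (c : C) (p : C ⊕ C) :
    sumEquivOfIndexEqTwo hC ht (p.map (c * ·) (c * ·)) = c * sumEquivOfIndexEqTwo hC ht p := by
  cases p <;> simp [mul_assoc]

end Subgroup

theorem powGraph_eq_fromRel : powGraph G = SimpleGraph.fromRel fun a b => a ∈ zpowers b := by
  ext; simp [powGraph]

theorem comGraph_eq_fromRel : comGraph G = SimpleGraph.fromRel fun a b => a * b = b * a := by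
  ext a b
  simp only [comGraph, SimpleGraph.fromRel_adj, eq_comm (a := b * a), or_self]

def cliqueMatchingGraph (C : Subgroup G) (z : G) : SimpleGraph G :=
  SimpleGraph.fromRel fun a b => (a ∈ C ∧ b ∈ C) ∨ a = 1 ∨ a = z ∨ b = z * a

theorem fromRel_eq_cliqueMatchingGraph {R : G → G → Prop} (hzC : z ∈ C)
    (hC : ∀ a ∈ C, ∀ b ∈ C, R a b ∨ R b a)
    (hout : ∀ a b, b ∉ C → (R a b ↔ a = 1 ∨ a = z ∨ a = b ∨ a = z * b))
    (hin : ∀ a b, a ∉ C → b ∈ C → R a b → R b a) :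
    SimpleGraph.fromRel R = cliqueMatchingGraph C z := by
  ext a b
  simp only [cliqueMatchingGraph, SimpleGraph.fromRel_adj, and_congr_right_iff]
  intro hab
  have hsep {g h : G} (hg : g ∈ C) (hh : h ∉ C) : h ≠ g := fun e => hh (e ▸ hg)
  by_cases ha : a ∈ C <;> by_cases hb : b ∈ C
  · simp [ha, hb, hC a ha b hb]
  · rw [or_iff_left_of_imp (hin b a hb ha), hout a b hb]
    have := hsep (one_mem C) hb
    have := hsep hzC hb
    have := hsep (mul_mem hzC ha) hb
    have := (hsep ha ((mul_mem_cancel_left hzC).not.2 hb)).symm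
    tauto
  · rw [or_iff_right_of_imp (hin a b ha hb), hout b a ha]
    have := hab.symm
    have := hsep (one_mem C) ha
    have := hsep hzC ha
    have := hsep (mul_mem hzC hb) ha
    have := (hsep hb ((mul_mem_cancel_left hzC).not.2 ha)).symm
    tauto
  · have := hsep (one_mem C) ha
    have := hsep hzC ha
    have := hsep (one_mem C) hb
    have := hsep hzC hb
    have := hab.symm
    rw [hout a b hb, hout b a ha]
    tauto

theorem comGraph_eq_cliqueMatchingGraph (hC : C.index = 2) (ht : t ∉ C)
    (hinv : ∀ c ∈ C, t⁻¹ * c * t = c⁻¹) (htt : t * t = 1) (hzC : z ∈ C)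
    (hinvol : ∀ c ∈ C, c * c = 1 ↔ c = 1 ∨ c = z) :
    comGraph G = cliqueMatchingGraph C z := by
  rw [comGraph_eq_fromRel]
  refine fromRel_eq_cliqueMatchingGraph hzC
    (fun a ha b hb => .inl (mul_comm_of_inv_mul_mul_eq_inv hinv ha hb))
    (fun a b hb => mul_comm_iff_of_notMem hC ?_ ?_ hzC hinvol hb) (fun _ _ _ _ h => h.symm)
  · exact fun g hg c hc => inv_mul_mul_eq_inv_of_notMem hC ht hinv hg hc
  · exact fun g hg => (mul_self_eq_of_notMem hC ht hinv hg).trans htt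

theorem powGraph_eq_cliqueMatchingGraph
    (hcomp : ∀ a ∈ C, ∀ b ∈ C, a ∈ zpowers b ∨ b ∈ zpowers a) (hzC : z ∈ C) (hzz : z * z = 1)
    (hsq : ∀ g ∉ C, g * g = z) :
    powGraph G = cliqueMatchingGraph C z := by
  rw [powGraph_eq_fromRel]
  exact fromRel_eq_cliqueMatchingGraph hzC hcomp
    (fun a b hb => mem_zpowers_iff_of_mul_self_eq (hsq b hb) hzz)
    (fun a b ha hb h => (ha (zpowers_le.2 hb h)).elim)

def cliqueMatchingGraphIso (f : G ≃ H) (hmem : ∀ a, f a ∈ C' ↔ a ∈ C) (hone : f 1 = 1)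
    (hmul : ∀ a, f (z * a) = z' * f a) :
    cliqueMatchingGraph C z ≃g cliqueMatchingGraph C' z' where
  toEquiv := f
  map_rel_iff' {a b} := by
    obtain rfl : f z = z' := by simpa [hone] using hmul 1
    simp only [cliqueMatchingGraph, SimpleGraph.fromRel_adj, hmem, ← hmul, ← hone,
      f.injective.eq_iff, f.injective.ne_iff]

theorem nonempty_cliqueMatchingGraph_iso (hC : C.index = 2) (hC' : C'.index = 2)
    (ψ : C ≃* C') (hzC : z ∈ C) :
    Nonempty (cliqueMatchingGraph C z ≃g cliqueMatchingGraph C' (ψ ⟨z, hzC⟩)) := by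
  obtain ⟨t, ht, -⟩ := index_eq_two_iff_exists_notMem_and.1 hC
  obtain ⟨t', ht', -⟩ := index_eq_two_iff_exists_notMem_and.1 hC'
  let e := sumEquivOfIndexEqTwo hC ht
  let e' := sumEquivOfIndexEqTwo hC' ht'
  let f : G ≃ H := e.symm.trans ((Equiv.sumCongr ψ.toEquiv ψ.toEquiv).trans e')
  have hf (p : C ⊕ C) : f (e p) = e' (p.map ψ ψ) := by simp [f]
  refine ⟨cliqueMatchingGraphIso f (fun a => ?_) ?_ (fun a => ?_)⟩
  · obtain ⟨p, rfl⟩ := e.surjective a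
    rw [hf, sumEquivOfIndexEqTwo_mem_iff, sumEquivOfIndexEqTwo_mem_iff]
    cases p <;> rfl
  · simpa [e, e'] using hf (.inl 1)
  · obtain ⟨p, rfl⟩ := e.surjective a
    rw [← sumEquivOfIndexEqTwo_map_mul_left hC ht ⟨z, hzC⟩, hf, hf,
      ← sumEquivOfIndexEqTwo_map_mul_left]
    cases p <;> simp [e']

end

/-- The power graph of the locally quaternion group `Q_{2^∞}` is isomorphic to the
commuting graph of the locally dihedral group `D_{2^∞}`. -/
theorem powGraph_locally_quaternion_iso_comGraph_locally_dihedral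
    {Q : Type*} [Group Q] (CQ : Subgroup Q) (hCQ : Nonempty (CQ ≃* Prufer2))
    (x z : Q) (hzC : z ∈ CQ) (hz : orderOf z = 2)
    (hzuniq : ∀ w ∈ CQ, orderOf w = 2 → w = z)
    (hx : x ^ 2 = z) (hconjQ : ∀ c ∈ CQ, x⁻¹ * c * x = c⁻¹)
    (hgenQ : Subgroup.closure ((CQ : Set Q) ∪ {x}) = ⊤)
    {D : Type*} [Group D] (CD : Subgroup D) (hCD : Nonempty (CD ≃* Prufer2))
    (s : D) (hs : s ^ 2 = 1) (hconjD : ∀ c ∈ CD, s * c * s = c⁻¹)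
    (hgenD : Subgroup.closure ((CD : Set D) ∪ {s}) = ⊤) :
    Nonempty (powGraph Q ≃g comGraph D) := by
  obtain ⟨eQ⟩ := hCQ
  obtain ⟨eD⟩ := hCD
  have hzz : z * z = 1 := by rw [← pow_two, ← hz, pow_orderOf_eq_one]
  have hxx : x * x = z := (pow_two x).symm.trans hx
  have hss : s * s = 1 := (pow_two s).symm.trans hs
  have hconjD' : ∀ c ∈ CD, s⁻¹ * c * s = c⁻¹ := by rwa [inv_eq_of_mul_eq_one_right hss]
  have hxC : x ∉ CQ := fun h => by
    simp [← hxx, mul_self_eq_one_of_inv_mul_mul_eq_inv hconjQ h h] at hz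
  have hsC : s ∉ CD := fun h => by
    obtain ⟨c, hc, hne⟩ := exists_mul_self_ne_one_of_mulEquiv eD
    exact hne (mul_self_eq_one_of_inv_mul_mul_eq_inv hconjD' h hc)
  have hQ := index_eq_two_of_closure_union_singleton hxC (hxx ▸ hzC)
    (fun c hc => hconjQ c hc ▸ inv_mem hc) hgenQ
  have hD := index_eq_two_of_closure_union_singleton hsC (hss ▸ one_mem CD)
    (fun c hc => hconjD' c hc ▸ inv_mem hc) hgenD
  rw [powGraph_eq_cliqueMatchingGraph
      (fun a ha b hb => mem_zpowers_or_mem_zpowers_of_mulEquiv eQ ha hb) hzC hzz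
      fun g hg => (mul_self_eq_of_notMem hQ hxC hconjQ hg).trans hxx,
    comGraph_eq_cliqueMatchingGraph hD hsC hconjD' hss (SetLike.coe_mem _)
      fun _ => mul_self_eq_one_iff_of_mulEquiv (eQ.trans eD.symm) hzC
        fun _ => mul_self_eq_one_iff_of_orderOf_eq_two hz hzuniq]
  exact nonempty_cliqueMatchingGraph_iso hQ hD (eQ.trans eD.symm) hzC
end
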